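/- arXiv:2603.09129 — 4 statements merged into one kernel-verified Lean document; each statement's English description precedes it below -/
import Mathlib

section
/- For every real c > 0, the function y ↦ Φ(c, y) tends to +∞ as y → ∞ (Filter.Tendsto along atTop to atTop). -/
/-- The function `𝓕(x, y) = (√(x(1+√y)² + 1) − √(x(1−√y)² + 1))²`. -/
noncomputable def Fcal (x y : ℝ) : ℝ :=
  (Real.sqrt (x * (1 + Real.sqrt y) ^ 2 + 1) - Real.sqrt (x * (1 - Real.sqrt y) ^ 2 + 1)) ^ 2

/-- The Verdú–Shamai asymptotic per-antenna MIMO capacity formula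
`Φ(x, y) = y·log₂(1 + x − 𝓕(x,y)/4) + log₂(1 + x·y − 𝓕(x,y)/4) − (log₂ e)·𝓕(x,y)/(4x)`. -/
noncomputable def Phi (x y : ℝ) : ℝ :=
  y * Real.logb 2 (1 + x - Fcal x y / 4) + Real.logb 2 (1 + x * y - Fcal x y / 4)
    - Real.logb 2 (Real.exp 1) * Fcal x y / (4 * x)

lemma Fcal_nonneg (x y : ℝ) : 0 ≤ Fcal x y := sq_nonneg _

lemma Fcal_le (x y : ℝ) (hx : 0 < x) : Fcal x y ≤ 4 * x := by
  set t := Real.sqrt y with ht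
  have ht0 : 0 ≤ t := Real.sqrt_nonneg y
  set a := x * (1 + t) ^ 2 + 1 with ha
  set b := x * (1 - t) ^ 2 + 1 with hb
  have ha0 : 0 ≤ a := by positivity
  have hb0 : 0 ≤ b := by positivity
  have hab : b ≤ a := by nlinarith [sq_nonneg t]
  have hsx : Real.sqrt x ^ 2 = x := Real.sq_sqrt hx.le
  have hsb : Real.sqrt b ^ 2 = b := Real.sq_sqrt hb0
  -- key: x*(t-1) ≤ √(b*x)
  have key : x * (t - 1) ≤ Real.sqrt b * Real.sqrt x := by
    rcases le_or_gt t 1 with h | h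
    · have : x * (t - 1) ≤ 0 := by nlinarith
      exact this.trans (by positivity)
    · rw [← Real.sqrt_mul hb0]
      rw [show x * (t - 1) = Real.sqrt ((x * (t - 1)) ^ 2) by
        rw [Real.sqrt_sq (by nlinarith)]]
      apply Real.sqrt_le_sqrt
      nlinarith
  have hle : Real.sqrt a ≤ Real.sqrt b + 2 * Real.sqrt x := by
    rw [show Real.sqrt b + 2 * Real.sqrt x =
        Real.sqrt ((Real.sqrt b + 2 * Real.sqrt x) ^ 2) by
      rw [Real.sqrt_sq (by positivity)]]
    apply Real.sqrt_le_sqrt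
    nlinarith
  have hge : Real.sqrt b ≤ Real.sqrt a := Real.sqrt_le_sqrt hab
  have : (Real.sqrt a - Real.sqrt b) ^ 2 ≤ (2 * Real.sqrt x) ^ 2 := by
    apply sq_le_sq' <;> nlinarith [Real.sqrt_nonneg a, Real.sqrt_nonneg b, Real.sqrt_nonneg x]
  calc Fcal x y = (Real.sqrt a - Real.sqrt b) ^ 2 := rfl
    _ ≤ (2 * Real.sqrt x) ^ 2 := this
    _ = 4 * x := by nlinarith

theorem Phi_tendsto_atTop (c : ℝ) (hc : 0 < c) :
    Filter.Tendsto (fun y : ℝ => Phi c y) Filter.atTop Filter.atTop := by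
  have hlog : Filter.Tendsto (fun y : ℝ =>
      Real.logb 2 (1 + c * y - c) - Real.logb 2 (Real.exp 1)) Filter.atTop Filter.atTop := by
    apply Filter.tendsto_atTop_add_const_right
    apply (Real.tendsto_logb_atTop one_lt_two).comp
    have : Filter.Tendsto (fun y : ℝ => c * y) Filter.atTop Filter.atTop :=
      Filter.tendsto_id.const_mul_atTop hc
    have := (Filter.tendsto_atTop_add_const_left Filter.atTop 1 this :
      Filter.Tendsto (fun y : ℝ => 1 + c * y) Filter.atTop Filter.atTop)
    exact Filter.tendsto_atTop_add_const_right _ (-c) this |>.congr (fun y => by ring)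
  apply Filter.tendsto_atTop_mono' _ _ hlog
  filter_upwards [Filter.eventually_ge_atTop (1 : ℝ)] with y hy
  have hF0 := Fcal_nonneg c y
  have hF4 := Fcal_le c y hc
  have h1 : 0 ≤ y * Real.logb 2 (1 + c - Fcal c y / 4) := by
    apply mul_nonneg (by linarith)
    apply Real.logb_nonneg one_lt_two
    linarith
  have h2 : Real.logb 2 (1 + c * y - c) ≤ Real.logb 2 (1 + c * y - Fcal c y / 4) := by
    apply Real.logb_le_logb_of_le one_lt_two
    · nlinarith
    · nlinarith
  have h3 : Real.logb 2 (Real.exp 1) * Fcal c y / (4 * c) ≤ Real.logb 2 (Real.exp 1) := by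
    rw [mul_div_assoc]
    have hle : Fcal c y / (4 * c) ≤ 1 := by
      rw [div_le_one (by positivity)]; linarith
    have hlb : 0 < Real.logb 2 (Real.exp 1) :=
      Real.logb_pos one_lt_two (by linarith [Real.exp_one_gt_d9])
    nlinarith
  unfold Phi
  linarith
end

section
/- For every fixed real y > 0, the function x ↦ Φ(x, y) is monotone increasing on (0, ∞): for all 0 < x₁ ≤ x₂ one has Φ(x₁, y) ≤ Φ(x₂, y). -/
/-!
Write `s = √(x(1+√y)² + 1) · √(x(1−√y)² + 1) = √(1 + 2x(1+y) + x²(1−y)²)`. Then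
`𝓕 = 2(1 + x(1+y) − s)`, and the two arguments of the logarithms in `Φ` become
`(s + 1 ± x(1−y))/2`, which are positive because `s > |x(1−y)|`. In these terms `Φ · ln 2` has
`x`-derivative `2y / (1 + x(1+y) + s) = y / ((1 + x − 𝓕/4)(1 + xy − 𝓕/4)) ≥ 0`.
-/

open Real Set

noncomputable def prodRoot (x y : ℝ) : ℝ :=
  √(1 + 2 * x * (1 + y) + (x * (1 - y)) ^ 2)

section

variable {x y : ℝ}

theorem sqrt_mul_sqrt_eq_prodRoot (hx : 0 ≤ x) (hy : 0 ≤ y) :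
    √(x * (1 + √y) ^ 2 + 1) * √(x * (1 - √y) ^ 2 + 1) = prodRoot x y := by
  rw [← sqrt_mul (by positivity), prodRoot]
  congr 1
  linear_combination (2 * x - 2 * x ^ 2 + x ^ 2 * (√y) ^ 2 + x ^ 2 * y) * sq_sqrt hy

theorem Fcal_eq_prodRoot (hx : 0 ≤ x) (hy : 0 ≤ y) :
    Fcal x y = 2 * (1 + x * (1 + y) - prodRoot x y) := by
  rw [Fcal, sub_sq, mul_assoc, sqrt_mul_sqrt_eq_prodRoot hx hy,
    sq_sqrt (by positivity), sq_sqrt (by positivity)]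
  linear_combination 2 * x * sq_sqrt hy

theorem sq_prodRoot (hx : 0 ≤ x) (hy : 0 ≤ y) :
    prodRoot x y ^ 2 = 1 + 2 * x * (1 + y) + (x * (1 - y)) ^ 2 :=
  sq_sqrt (by positivity)

theorem abs_lt_prodRoot (hx : 0 ≤ x) (hy : 0 ≤ y) : |x * (1 - y)| < prodRoot x y := by
  rw [prodRoot, lt_sqrt (abs_nonneg _), sq_abs]
  nlinarith [mul_nonneg hx hy]

theorem hasDerivAt_prodRoot (hx : 0 ≤ x) (hy : 0 ≤ y) :
    HasDerivAt (prodRoot · y) ((1 + y + x * (1 - y) ^ 2) / prodRoot x y) x := by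
  have hq : HasDerivAt (fun t => 1 + 2 * t * (1 + y) + (t * (1 - y)) ^ 2)
      (2 * (1 + y) + 2 * (x * (1 - y)) * (1 - y)) x := by
    refine (((((hasDerivAt_id' x).const_mul 2).mul_const (1 + y)).const_add 1).fun_add
      (((hasDerivAt_id' x).mul_const (1 - y)).fun_pow 2)).congr_deriv ?_
    ring
  have hpos : 0 < prodRoot x y := (abs_nonneg _).trans_lt (abs_lt_prodRoot hx hy)
  refine (hq.sqrt ?_).congr_deriv ?_
  · rw [← sq_prodRoot hx hy]
    positivity
  · rw [← prodRoot]
    field_simp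

noncomputable def phiNats (x y : ℝ) : ℝ :=
  y * log ((prodRoot x y + 1 + x * (1 - y)) / 2) + log ((prodRoot x y + 1 - x * (1 - y)) / 2)
    - (1 + x * (1 + y) - prodRoot x y) / (2 * x)

theorem Phi_eq_phiNats (hx : 0 ≤ x) (hy : 0 ≤ y) : Phi x y = phiNats x y / log 2 := by
  have hα : 1 + x - Fcal x y / 4 = (prodRoot x y + 1 + x * (1 - y)) / 2 := by
    rw [Fcal_eq_prodRoot hx hy]; ring
  have hβ : 1 + x * y - Fcal x y / 4 = (prodRoot x y + 1 - x * (1 - y)) / 2 := by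
    rw [Fcal_eq_prodRoot hx hy]; ring
  rw [Phi, phiNats, hα, hβ, Fcal_eq_prodRoot hx hy]
  simp only [logb, log_exp]
  ring

/- `s` stands for `prodRoot x y` and `t` for its `x`-derivative. The `linear_combination`
coefficients are the quotients of the cleared identity by the relations `hs` and `ht`. -/
theorem phiNats_deriv_identity {s t : ℝ} (hx : x ≠ 0) (hP : s + 1 + x * (1 - y) ≠ 0)
    (hM : s + 1 - x * (1 - y) ≠ 0) (hN : 1 + x * (1 + y) + s ≠ 0)
    (hs : s ^ 2 = 1 + 2 * x * (1 + y) + (x * (1 - y)) ^ 2)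
    (ht : s * t = 1 + y + x * (1 - y) ^ 2) :
    y * (t + (1 - y)) / (s + 1 + x * (1 - y)) + (t - (1 - y)) / (s + 1 - x * (1 - y))
      - (s - 1 - x * t) / (2 * x ^ 2) = 2 * y / (1 + x * (1 + y) + s) := by
  rw [div_add_div _ _ hP hM, div_sub_div _ _ (mul_ne_zero hP hM) (by positivity),
    div_eq_div_iff (by positivity) hN]
  linear_combination
    (-1 - 2 * s - s ^ 2 - 3 * x - x * t - x * s + x * s * t - 3 * x * y - x * y * s - 2 * x ^ 2
      - x ^ 2 * t - x ^ 2 * y * t - 2 * x ^ 2 * y ^ 2) * hs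
    + (4 * x + 4 * x * s + 8 * x ^ 2 + 4 * x ^ 2 * s + 8 * x ^ 2 * y + 4 * x ^ 2 * y * s
      + 4 * x ^ 3 + 4 * x ^ 3 * y ^ 2) * ht

theorem hasDerivAt_phiNats (hx : 0 < x) (hy : 0 ≤ y) :
    HasDerivAt (phiNats · y) (2 * y / (1 + x * (1 + y) + prodRoot x y)) x := by
  have hS := hasDerivAt_prodRoot hx.le hy
  obtain ⟨hlo, hhi⟩ := abs_lt.mp (abs_lt_prodRoot hx.le hy)
  have hs : 0 < prodRoot x y := by linarith
  have hP : 0 < prodRoot x y + 1 + x * (1 - y) := by linarith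
  have hM : 0 < prodRoot x y + 1 - x * (1 - y) := by linarith
  have hlogP := (((hS.add_const 1).fun_add ((hasDerivAt_id' x).mul_const (1 - y))).div_const 2).log
    (by positivity)
  have hlogM := (((hS.add_const 1).fun_sub ((hasDerivAt_id' x).mul_const (1 - y))).div_const 2).log
    (by positivity)
  have hquot := ((((hasDerivAt_id' x).mul_const (1 + y)).const_add 1).fun_sub hS).div
    ((hasDerivAt_id' x).const_mul 2) (by positivity)
  refine (((hlogP.const_mul y).fun_add hlogM).fun_sub hquot).congr_deriv ?_
  rw [← phiNats_deriv_identity hx.ne' hP.ne' hM.ne' (by positivity)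
    (sq_prodRoot hx.le hy) (mul_div_cancel₀ _ hs.ne')]
  field_simp
  ring

theorem monotoneOn_phiNats (hy : 0 ≤ y) : MonotoneOn (phiNats · y) (Ioi 0) := by
  refine monotoneOn_of_hasDerivWithinAt_nonneg (convex_Ioi 0)
    (f' := fun x => 2 * y / (1 + x * (1 + y) + prodRoot x y))
    (fun x hx => (hasDerivAt_phiNats hx hy).continuousAt.continuousWithinAt) ?_ ?_ <;>
    rw [interior_Ioi]
  · exact fun x hx => (hasDerivAt_phiNats hx hy).hasDerivWithinAt
  · intro x (hx : 0 < x)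
    have : 0 ≤ prodRoot x y := sqrt_nonneg _
    positivity

end

theorem Phi_mono_fst (y : ℝ) (hy : 0 < y) :
    ∀ x₁ x₂ : ℝ, 0 < x₁ → x₁ ≤ x₂ → Phi x₁ y ≤ Phi x₂ y := by
  intro x₁ x₂ hx₁ hle
  have hx₂ : 0 < x₂ := hx₁.trans_le hle
  rw [Phi_eq_phiNats hx₁.le hy.le, Phi_eq_phiNats hx₂.le hy.le]
  gcongr
  exact monotoneOn_phiNats hy.le hx₁ hx₂ hle
end

section
/- For every fixed real x > 0, the function y ↦ Φ(x, y) is monotone increasing on (1, ∞): for all 1 < y₁ ≤ y₂ one has Φ(x, y₁) ≤ Φ(x, y₂). -/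
/-!
Let `q > 0` be the positive root of `q² = (1 - x + x y) q + x`. Then `1 + x y - 𝓕/4 = q`,
`1 + x - 𝓕/4 = 1 + x/q` and `𝓕/(4x) = 1 - 1/q`, so
`Φ(x, y) · log 2 = y log (1 + x/q) + log q + 1/q - 1`.
The equation for `q` says that `q` is a critical point of the right-hand side as a function of `q`,
so by the envelope principle its derivative in `y` is just the partial derivative
`log (1 + x/q) ≥ 0`.
-/

open Real

noncomputable def posRoot (b c : ℝ) : ℝ := (b + √(b ^ 2 + 4 * c)) / 2

lemma posRoot_pos (b : ℝ) {c : ℝ} (hc : 0 < c) : 0 < posRoot b c := by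
  have hs := sq_sqrt (by positivity : 0 ≤ b ^ 2 + 4 * c)
  have := sqrt_nonneg (b ^ 2 + 4 * c)
  unfold posRoot
  nlinarith

lemma posRoot_sq (b : ℝ) {c : ℝ} (hc : 0 ≤ c) : posRoot b c ^ 2 = b * posRoot b c + c := by
  have hs := sq_sqrt (by positivity : 0 ≤ b ^ 2 + 4 * c)
  unfold posRoot
  linear_combination hs / 4

lemma differentiable_posRoot {c : ℝ} (hc : 0 < c) :
    Differentiable ℝ (fun b => posRoot b c) := by
  unfold posRoot
  fun_prop (disch := intro; positivity)

lemma hasDerivAt_envelope {Q : ℝ → ℝ} {x y q' : ℝ} (hx : 0 ≤ x) (hQ : 0 < Q y)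
    (hcrit : Q y ^ 2 = (1 - x + x * y) * Q y + x) (hQ' : HasDerivAt Q q' y) :
    HasDerivAt (fun t => t * log (1 + x / Q t) + log (Q t) + (Q t)⁻¹) (log (1 + x / Q y)) y := by
  have hpos : 0 < 1 + x / Q y := by positivity
  have hlog := (((hQ'.inv hQ.ne').const_mul x).const_add 1).log hpos.ne'
  have h := (((hasDerivAt_id y).mul hlog).add (hQ'.log hQ.ne')).add (hQ'.inv hQ.ne')
  refine h.congr_deriv ?_
  simp only [Pi.inv_apply, id, one_mul, ← div_eq_mul_inv]
  field_simp
  linear_combination q' * hcrit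

noncomputable def phiRoot (x y : ℝ) : ℝ := posRoot (1 - x + x * y) x

lemma phiRoot_pos {x : ℝ} (hx : 0 < x) (y : ℝ) : 0 < phiRoot x y := posRoot_pos _ hx

lemma phiRoot_sq {x : ℝ} (hx : 0 ≤ x) (y : ℝ) :
    phiRoot x y ^ 2 = (1 - x + x * y) * phiRoot x y + x :=
  posRoot_sq _ hx

lemma monotone_envelope {x : ℝ} (hx : 0 < x) :
    Monotone fun y => y * log (1 + x / phiRoot x y) + log (phiRoot x y) + (phiRoot x y)⁻¹ := by
  have hdiff : Differentiable ℝ (phiRoot x) :=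
    (differentiable_posRoot hx).comp (by fun_prop)
  have hderiv (y : ℝ) := hasDerivAt_envelope hx.le (phiRoot_pos hx y) (phiRoot_sq hx.le y)
    (hdiff y).hasDerivAt
  refine monotone_of_deriv_nonneg (fun y => (hderiv y).differentiableAt) fun y => ?_
  rw [(hderiv y).deriv]
  exact log_nonneg (le_add_of_nonneg_right (div_nonneg hx.le (phiRoot_pos hx y).le))

lemma Fcal_div_four {x y : ℝ} (hx : 0 ≤ x) (hy : 0 ≤ y) :
    Fcal x y / 4 = 1 + x * y - phiRoot x y := by
  have hs : √y ^ 2 = y := sq_sqrt hy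
  have ha : 0 ≤ x * (1 + √y) ^ 2 + 1 := by positivity
  have hb : 0 ≤ x * (1 - √y) ^ 2 + 1 := by positivity
  have hab : (x * (1 + √y) ^ 2 + 1) * (x * (1 - √y) ^ 2 + 1) = (1 - x + x * y) ^ 2 + 4 * x := by
    linear_combination (x ^ 2 * (√y ^ 2 + y - 2) + 2 * x) * hs
  unfold Fcal phiRoot posRoot
  rw [sub_sq, sq_sqrt ha, sq_sqrt hb, mul_assoc, ← sqrt_mul ha, hab]
  linear_combination x * hs / 2

lemma Phi_eq {x y : ℝ} (hx : 0 < x) (hy : 0 ≤ y) :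
    Phi x y =
      (y * log (1 + x / phiRoot x y) + log (phiRoot x y) + (phiRoot x y)⁻¹ - 1) / log 2 := by
  have hq := phiRoot_pos hx y
  have hcrit := phiRoot_sq hx.le y
  have hF := Fcal_div_four hx.le hy
  have h₁ : 1 + x - Fcal x y / 4 = 1 + x / phiRoot x y := by
    rw [hF]; field_simp; linear_combination hcrit
  have h₂ : 1 + x * y - Fcal x y / 4 = phiRoot x y := by rw [hF]; ring
  have h₃ : Fcal x y / (4 * x) = 1 - (phiRoot x y)⁻¹ := by
    rw [← div_div, hF]; field_simp; linear_combination (-1) * hcrit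
  unfold Phi
  rw [h₁, h₂, mul_div_assoc, h₃]
  simp only [logb, log_exp]
  ring

theorem Phi_mono_snd (x : ℝ) (hx : 0 < x) :
    ∀ y₁ y₂ : ℝ, 1 < y₁ → y₁ ≤ y₂ → Phi x y₁ ≤ Phi x y₂ := by
  intro y₁ y₂ h₁ h₁₂
  rw [Phi_eq hx (by linarith), Phi_eq hx (by linarith)]
  have hmono := monotone_envelope hx h₁₂
  exact div_le_div_of_nonneg_right (by linarith) (log_nonneg one_le_two)
end

section
/- Let α > 0, N_b > 0, 0 < γ ≤ 1 be reals, and let δ₂ > 1 and δ₁ ≥ 2δ₂ − 1 be reals. Then Φ(αγN_b, δ₂) ≤ Φ(αN_b, δ₁ − δ₂ + 1), and consequently the asymptotic normalized instantaneous secrecy rate [Φ(αγN_b, δ₂) − Φ(αN_b, δ₁ − δ₂ + 1)]⁺ equals 0 (Corollary 4 and its surrounding remark: when the eavesdropper's antenna growth rate satisfies δ₁ ≥ 2δ₂ − 1 and the eavesdropper's noise is no stronger than the legitimate receiver's, perfect eavesdropping is achieved asymptotically). -/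
open Real Set

noncomputable def phiArgmin (x y : ℝ) : ℝ :=
  (√((1 + x - x * y) ^ 2 + 4 * x * y) - (1 + x - x * y)) / (2 * x * y)

noncomputable def phiObjective (x y t : ℝ) : ℝ :=
  y * (t - 1 - log t) + log (1 + x * y * t)

section

variable {x y : ℝ}

lemma sqrt_discriminant_eq (hx : 0 < x) (hy : 0 < y) :
    √((1 + x - x * y) ^ 2 + 4 * x * y) = 2 * x * y * phiArgmin x y + (1 + x - x * y) := by
  unfold phiArgmin
  field_simp
  ring

lemma phiArgmin_pos (hx : 0 < x) (hy : 0 < y) : 0 < phiArgmin x y := by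
  have hb : 1 + x - x * y < √((1 + x - x * y) ^ 2 + 4 * x * y) :=
    lt_sqrt_of_sq_lt (by nlinarith [mul_pos hx hy])
  unfold phiArgmin
  exact div_pos (by linarith) (by positivity)

lemma phiArgmin_quadratic (hx : 0 < x) (hy : 0 < y) :
    x * y * phiArgmin x y ^ 2 + (1 + x - x * y) * phiArgmin x y - 1 = 0 := by
  have hsq := sq_sqrt (show 0 ≤ (1 + x - x * y) ^ 2 + 4 * x * y by nlinarith [mul_pos hx hy])
  rw [sqrt_discriminant_eq hx hy] at hsq
  have hxy : 4 * (x * y) ≠ 0 := by positivity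
  apply mul_left_cancel₀ hxy
  linear_combination hsq

lemma Fcal_eq (hx : 0 < x) (hy : 0 < y) : Fcal x y = 4 * (x * y) * (1 - phiArgmin x y) := by
  have hsy : √y ^ 2 = y := sq_sqrt hy.le
  have hA : 0 ≤ x * (1 + √y) ^ 2 + 1 := by positivity
  have hB : 0 ≤ x * (1 - √y) ^ 2 + 1 := by positivity
  have hprod : √(x * (1 + √y) ^ 2 + 1) * √(x * (1 - √y) ^ 2 + 1)
      = √((1 + x - x * y) ^ 2 + 4 * x * y) := by
    rw [← sqrt_mul hA]
    congr 1
    linear_combination (x ^ 2 * (√y ^ 2 + y - 2) + 2 * x) * hsy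
  rw [sqrt_discriminant_eq hx hy] at hprod
  unfold Fcal
  linear_combination sq_sqrt hA + sq_sqrt hB - 2 * hprod + 2 * x * hsy

lemma Phi_eq_phiObjective_div_log_two (hx : 0 < x) (hy : 0 < y) :
    Phi x y = phiObjective x y (phiArgmin x y) / log 2 := by
  have hd := phiArgmin_pos hx hy
  have hF := Fcal_eq hx hy
  have h₁ : 1 + x - Fcal x y / 4 = (phiArgmin x y)⁻¹ := by
    refine eq_inv_of_mul_eq_one_left ?_
    rw [hF]
    linear_combination phiArgmin_quadratic hx hy
  have h₂ : 1 + x * y - Fcal x y / 4 = 1 + x * y * phiArgmin x y := by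
    rw [hF]; ring
  rw [Phi, h₁, h₂, hF, logb, logb, logb, log_exp, log_inv, phiObjective]
  field_simp
  ring

/-- The derivative of `phiObjective x y` at `s > 0`, factored so that its sign is that of
`s - phiArgmin x y`. -/
lemma hasDerivAt_phiObjective (hx : 0 < x) (hy : 0 < y) {s : ℝ} (hs : 0 < s) :
    HasDerivAt (phiObjective x y)
      (y * (s - phiArgmin x y) * (x * y * s + (phiArgmin x y)⁻¹) / (s * (1 + x * y * s))) s := by
  have hd := phiArgmin_pos hx hy
  have hlin : 0 < 1 + x * y * s := by positivity
  have hderiv : HasDerivAt (phiObjective x y) (y * (1 - s⁻¹) + x * y / (1 + x * y * s)) s := by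
    have hlog := ((hasDerivAt_id s).const_mul (x * y)).const_add 1 |>.log hlin.ne'
    simp only [mul_one, id] at hlog
    exact (((hasDerivAt_id s).sub_const 1).sub (hasDerivAt_log hs.ne')).const_mul y |>.add hlog
  convert hderiv using 1
  field_simp
  linear_combination -s * phiArgmin_quadratic hx hy

lemma phiObjective_phiArgmin_le (hx : 0 < x) (hy : 0 < y) {t : ℝ} (ht : 0 < t) :
    phiObjective x y (phiArgmin x y) ≤ phiObjective x y t := by
  have hd := phiArgmin_pos hx hy
  have hderiv {s : ℝ} (hs : 0 < s) := hasDerivAt_phiObjective hx hy hs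
  have hcont {D : Set ℝ} (hD : D ⊆ Ioi 0) : ContinuousOn (phiObjective x y) D :=
    fun s hs ↦ (hderiv (hD hs)).continuousAt.continuousWithinAt
  have hdiff {D : Set ℝ} (hD : D ⊆ Ioi 0) : DifferentiableOn ℝ (phiObjective x y) D :=
    fun s hs ↦ (hderiv (hD hs)).differentiableAt.differentiableWithinAt
  rcases le_total t (phiArgmin x y) with htd | hdt
  · have hanti : AntitoneOn (phiObjective x y) (Ioc 0 (phiArgmin x y)) := by
      refine antitoneOn_of_deriv_nonpos (convex_Ioc _ _) (hcont Ioc_subset_Ioi_self) ?_ ?_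
      · rw [interior_Ioc]; exact hdiff Ioo_subset_Ioi_self
      · rw [interior_Ioc]
        rintro s ⟨hs, hsd⟩
        rw [(hderiv hs).deriv]
        have : y * (s - phiArgmin x y) ≤ 0 := mul_nonpos_of_nonneg_of_nonpos hy.le (by linarith)
        exact div_nonpos_of_nonpos_of_nonneg (mul_nonpos_of_nonpos_of_nonneg this (by positivity))
          (by positivity)
    exact hanti ⟨ht, htd⟩ ⟨hd, le_rfl⟩ htd
  · have hmono : MonotoneOn (phiObjective x y) (Ici (phiArgmin x y)) := by
      have hsub : Ici (phiArgmin x y) ⊆ Ioi 0 := Ici_subset_Ioi.mpr hd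
      refine monotoneOn_of_deriv_nonneg (convex_Ici _) (hcont hsub) ?_ ?_
      · rw [interior_Ici]; exact hdiff (Ioi_subset_Ici_self.trans hsub)
      · rw [interior_Ici]
        intro s (hds : phiArgmin x y < s)
        have hs := hd.trans hds
        rw [(hderiv hs).deriv]
        have : 0 ≤ s - phiArgmin x y := by linarith
        exact div_nonneg (mul_nonneg (mul_nonneg hy.le this) (by positivity)) (by positivity)
    exact hmono (mem_Ici.2 le_rfl) hdt hdt

end

lemma phiObjective_mono {x₁ x₂ y₁ y₂ t : ℝ} (hx₁ : 0 < x₁) (hx : x₁ ≤ x₂)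
    (hy₁ : 0 < y₁) (hy : y₁ ≤ y₂) (ht : 0 < t) :
    phiObjective x₁ y₁ t ≤ phiObjective x₂ y₂ t := by
  have hlog : 0 ≤ t - 1 - log t := by linarith [log_le_sub_one_of_pos ht]
  unfold phiObjective
  gcongr
  exact (hx₁.trans_le hx).le

lemma Phi_mono {x₁ x₂ y₁ y₂ : ℝ} (hx₁ : 0 < x₁) (hx : x₁ ≤ x₂) (hy₁ : 0 < y₁) (hy : y₁ ≤ y₂) :
    Phi x₁ y₁ ≤ Phi x₂ y₂ := by
  have hx₂ := hx₁.trans_le hx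
  have hy₂ := hy₁.trans_le hy
  have hd := phiArgmin_pos hx₂ hy₂
  rw [Phi_eq_phiObjective_div_log_two hx₁ hy₁, Phi_eq_phiObjective_div_log_two hx₂ hy₂]
  gcongr
  calc phiObjective x₁ y₁ (phiArgmin x₁ y₁)
      ≤ phiObjective x₁ y₁ (phiArgmin x₂ y₂) := phiObjective_phiArgmin_le hx₁ hy₁ hd
    _ ≤ phiObjective x₂ y₂ (phiArgmin x₂ y₂) := phiObjective_mono hx₁ hx hy₁ hy hd

/-- Corollary 4: when `δ₁ ≥ 2δ₂ − 1` and Eve's noise is no stronger than Bob's (`γ ≤ 1`),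
Bob's asymptotic normalized rate is at most Eve's, so the asymptotic normalized
instantaneous secrecy rate `[Φ(αγN_b, δ₂) − Φ(αN_b, δ₁ − δ₂ + 1)]⁺` is zero. -/
theorem perfect_eavesdropping_asymptotic (α Nb γ δ₁ δ₂ : ℝ)
    (hα : 0 < α) (hNb : 0 < Nb) (hγ0 : 0 < γ) (hγ1 : γ ≤ 1)
    (hδ₂ : 1 < δ₂) (hδ₁ : δ₁ ≥ 2 * δ₂ - 1) :
    Phi (α * γ * Nb) δ₂ ≤ Phi (α * Nb) (δ₁ - δ₂ + 1) ∧
    max (Phi (α * γ * Nb) δ₂ - Phi (α * Nb) (δ₁ - δ₂ + 1)) 0 = 0 := by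
  have hx : α * γ * Nb ≤ α * Nb :=
    mul_le_mul_of_nonneg_right (mul_le_of_le_one_right hα.le hγ1) hNb.le
  have hle : Phi (α * γ * Nb) δ₂ ≤ Phi (α * Nb) (δ₁ - δ₂ + 1) :=
    Phi_mono (by positivity) hx (by linarith) (by linarith)
  exact ⟨hle, max_eq_right (sub_nonpos.mpr hle)⟩
end
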